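/- arXiv:1307.4992 — 6 statements merged into one kernel-verified Lean document; each statement's English description precedes it below -/
import Mathlib

section
/- Let U be a separable real Banach space, X a separable real Hilbert space with orthonormal basis (e_k)_{k∈ℕ}, and i : X → U a bounded linear operator. Let (ξ_k)_{k∈ℕ} be a sequence of independent standard Gaussian random variables on a probability space (Ω, 𝒜, P). Then for every u* ∈ U* the series Z u* := ∑_{k=1}^∞ ⟨i e_k, u*⟩ ξ_k converges in L²_P(Ω;ℝ) and its characteristic function satisfies E[exp(i·θ·(Z u*))] evaluated at θ = 1 equals exp(−(1/2)‖i* u*‖²_X); that is, E[exp(i (Z u*))] = exp(−(1/2)‖i* u*‖²_X) for all u* ∈ U*. -/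
/-!
The coefficients `u (i (e k)) = ⟪i* u, e k⟫` are square-summable with sum `‖i* u‖²` (Parseval).
Independent standard Gaussians form an orthonormal family in `L²(P)`, so the series converges in
`L²`. Each partial sum is a centred Gaussian with variance `∑_{k<N} u (i (e k))²`, and `L²`
convergence implies convergence in distribution, hence pointwise convergence of characteristic
functions (Lévy), which identifies the characteristic function of the limit.
-/

open MeasureTheory Filter Set
open scoped ENNReal NNReal RealInnerProductSpace

/-- The adjoint `i* : U* → X` of a bounded linear operator `i : X → U` from a Hilbert space
into a Banach space, via the Riesz representation. -/
noncomputable def iStar {X U : Type*} [NormedAddCommGroup X] [InnerProductSpace ℝ X]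
    [CompleteSpace X] [NormedAddCommGroup U] [NormedSpace ℝ U]
    (i : X →L[ℝ] U) (u : U →L[ℝ] ℝ) : X :=
  (InnerProductSpace.toDual ℝ X).symm (u.comp i)

open ProbabilityTheory Topology

theorem hasSum_sq_iStar {X U ι : Type*} [NormedAddCommGroup X] [InnerProductSpace ℝ X]
    [CompleteSpace X] [NormedAddCommGroup U] [NormedSpace ℝ U] (e : HilbertBasis ι ℝ X)
    (i : X →L[ℝ] U) (u : U →L[ℝ] ℝ) :
    HasSum (fun k => u (i (e k)) ^ 2) (‖iStar i u‖ ^ 2) := by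
  have hc (k : ι) : u (i (e k)) = ⟪iStar i u, e k⟫ :=
    (InnerProductSpace.toDual_symm_apply (y := u.comp i)).symm
  simpa [hc, sq, real_inner_comm] using e.hasSum_inner_mul_inner (iStar i u) (iStar i u)

theorem Orthonormal.summable_smul_of_summable_sq {ι E : Type*} [NormedAddCommGroup E]
    [InnerProductSpace ℝ E] [CompleteSpace E] {v : ι → E} (hv : Orthonormal ℝ v) {c : ι → ℝ}
    (hc : Summable fun k => c k ^ 2) : Summable fun k => c k • v k := by
  simpa using (hv.orthogonalFamily.summable_iff_norm_sq_summable c).2 (by simpa using hc)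

namespace MeasureTheory

theorem exists_memLp_tendsto_eLpNorm_sub_sum {α E : Type*} [MeasurableSpace α]
    {μ : Measure α} [NormedAddCommGroup E] {p : ℝ≥0∞} [Fact (1 ≤ p)] {f : ℕ → α → E}
    {F : ℕ → Lp E p μ} (hF : ∀ k, F k =ᵐ[μ] f k) (hs : Summable F) :
    ∃ g, MemLp g p μ ∧
      Tendsto (fun N => eLpNorm (fun x => g x - ∑ k ∈ Finset.range N, f k x) p μ) atTop (𝓝 0) := by
  obtain ⟨L, hL⟩ := hs
  refine ⟨L, Lp.memLp L, ?_⟩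
  refine ((Lp.tendsto_Lp_iff_tendsto_eLpNorm' _ L).1 hL.tendsto_sum_nat).congr fun N => ?_
  rw [eLpNorm_sub_comm]
  refine eLpNorm_congr_ae ?_
  filter_upwards [Lp.coeFn_fun_finsetSum (Finset.range N) F, ae_all_iff.2 hF] with x hx hfx
  rw [Pi.sub_apply, hx]
  simp only [hfx]

theorem TendstoInMeasure.tendsto_charFun {Ω E : Type*} [MeasurableSpace Ω] {P : Measure Ω}
    [IsProbabilityMeasure P] [NormedAddCommGroup E] [InnerProductSpace ℝ E]
    [FiniteDimensional ℝ E] [MeasurableSpace E] [BorelSpace E]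
    {f : ℕ → Ω → E} {g : Ω → E} (h : TendstoInMeasure P f atTop g)
    (hf : ∀ n, AEMeasurable (f n) P) (t : E) :
    Tendsto (fun n => charFun (P.map (f n)) t) atTop (𝓝 (charFun (P.map g) t)) :=
  ProbabilityMeasure.tendsto_iff_tendsto_charFun.1 (h.tendstoInDistribution hf).tendsto t

end MeasureTheory

namespace ProbabilityTheory

variable {Ω : Type*} [MeasurableSpace Ω] {P : Measure Ω}

theorem HasLaw.memLp_of_gaussianReal {X : Ω → ℝ} {m : ℝ} {v : ℝ≥0}
    (hX : HasLaw X (gaussianReal m v) P) {p : ℝ≥0∞} (hp : p ≠ ∞) : MemLp X p P :=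
  (memLp_map_measure_iff aestronglyMeasurable_id hX.aemeasurable).1
    (hX.map_eq ▸ memLp_id_gaussianReal' p hp)

theorem HasLaw.integral_eq_zero_of_gaussianReal {X : Ω → ℝ} {v : ℝ≥0}
    (hX : HasLaw X (gaussianReal 0 v) P) : P[X] = 0 := by
  rw [hX.integral_eq, integral_id_gaussianReal]

theorem HasLaw.integral_sq_of_gaussianReal {X : Ω → ℝ} {v : ℝ≥0}
    (hX : HasLaw X (gaussianReal 0 v) P) : P[X ^ 2] = (v : ℝ) := by
  rw [← variance_id_gaussianReal (μ := 0), ← hX.variance_eq,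
    variance_of_integral_eq_zero hX.aemeasurable hX.integral_eq_zero_of_gaussianReal]
  rfl

theorem orthonormal_toLp_of_pairwise_indepFun {ι : Type*} {ξ : ι → Ω → ℝ}
    (hL2 : ∀ k, MemLp (ξ k) 2 P) (hind : Pairwise fun j k => IndepFun (ξ j) (ξ k) P)
    (hmean : ∀ k, P[ξ k] = 0) (hsq : ∀ k, P[ξ k ^ 2] = 1) :
    Orthonormal ℝ fun k => (hL2 k).toLp (ξ k) := by
  classical
  rw [orthonormal_iff_ite]
  intro j k
  have hinner : ⟪(hL2 j).toLp (ξ j), (hL2 k).toLp (ξ k)⟫ = P[ξ j * ξ k] := by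
    rw [L2.inner_def]
    refine integral_congr_ae ?_
    filter_upwards [(hL2 j).coeFn_toLp, (hL2 k).coeFn_toLp] with ω hj hk
    rw [hj, hk, RCLike.inner_apply, RCLike.conj_to_real, mul_comm, Pi.mul_apply]
  rw [hinner]
  split_ifs with hjk
  · subst hjk
    rw [← hsq j, sq]
  · rw [(hind hjk).integral_mul_eq_mul_integral (hL2 j).aestronglyMeasurable
      (hL2 k).aestronglyMeasurable, hmean j, zero_mul]

theorem charFun_map_sum_mul_of_gaussianReal {ι : Type*} {ξ : ι → Ω → ℝ}
    (hξ : ∀ k, HasLaw (ξ k) (gaussianReal 0 1) P) (hind : iIndepFun ξ P) (c : ι → ℝ)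
    (s : Finset ι) (t : ℝ) :
    charFun (P.map fun ω => ∑ k ∈ s, c k * ξ k ω) t
      = Complex.exp (-((∑ k ∈ s, c k ^ 2 : ℝ) : ℂ) * t ^ 2 / 2) := by
  have hind' : iIndepFun (fun k ω => c k * ξ k ω) P :=
    hind.comp (fun k x => c k * x) fun k => measurable_const_mul (c k)
  rw [(hind'.restrict s).charFun_map_fun_finsetSum_eq_prod
    fun k _ => (hξ k).aemeasurable.const_mul (c k)]
  simp_rw [Finset.prod_apply, charFun_map_mul_comp (hξ _).aemeasurable, (hξ _).map_eq,
    charFun_gaussianReal, ← Complex.exp_sum]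
  congr 1
  push_cast
  rw [neg_mul, Finset.sum_mul, ← Finset.sum_neg_distrib, Finset.sum_div]
  refine Finset.sum_congr rfl fun k _ => ?_
  ring

end ProbabilityTheory

theorem statement4_general
    (U : Type*) [NormedAddCommGroup U] [NormedSpace ℝ U]
    (X : Type*) [NormedAddCommGroup X] [InnerProductSpace ℝ X]
    [CompleteSpace X]
    (e : HilbertBasis ℕ ℝ X) (i : X →L[ℝ] U)
    (Ω : Type*) [MeasurableSpace Ω] (P : Measure Ω) [IsProbabilityMeasure P]
    (ξ : ℕ → Ω → ℝ)
    (hindep : ProbabilityTheory.iIndepFun ξ P)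
    (hgauss : ∀ k, Measure.map (ξ k) P = ProbabilityTheory.gaussianReal 0 1) :
    ∀ u : U →L[ℝ] ℝ, ∃ g : Ω → ℝ,
      MemLp g 2 P ∧
      Tendsto (fun N => eLpNorm
          (fun ω => g ω - ∑ k ∈ Finset.range N, u (i (e k)) * ξ k ω) 2 P)
        atTop (nhds 0) ∧
      ∫ ω, Complex.exp (Complex.I * (g ω : ℂ)) ∂P
        = Complex.exp (-(1 / 2) * ((‖iStar i u‖ ^ 2 : ℝ) : ℂ)) := by
  intro u
  set c : ℕ → ℝ := fun k => u (i (e k))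
  have hlaw (k : ℕ) : HasLaw (ξ k) (gaussianReal 0 1) P :=
    ⟨aemeasurable_of_map_neZero (by rw [hgauss k]; infer_instance), hgauss k⟩
  have hL2 (k : ℕ) : MemLp (ξ k) 2 P := (hlaw k).memLp_of_gaussianReal ENNReal.ofNat_ne_top
  have hortho : Orthonormal ℝ fun k => (hL2 k).toLp (ξ k) :=
    orthonormal_toLp_of_pairwise_indepFun hL2 (fun _ _ hjk => hindep.indepFun hjk)
      (fun k => (hlaw k).integral_eq_zero_of_gaussianReal)
      (fun k => by simpa using (hlaw k).integral_sq_of_gaussianReal)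
  have hcoe (k : ℕ) : c k • (hL2 k).toLp (ξ k) =ᵐ[P] fun ω => c k * ξ k ω := by
    filter_upwards [Lp.coeFn_smul (c k) ((hL2 k).toLp (ξ k)), (hL2 k).coeFn_toLp] with ω h1 h2
    simp [h1, h2]
  obtain ⟨g, hg, hlim⟩ := exists_memLp_tendsto_eLpNorm_sub_sum hcoe
    (hortho.summable_smul_of_summable_sq (hasSum_sq_iStar e i u).summable)
  refine ⟨g, hg, hlim, ?_⟩
  have hS (N : ℕ) : AEMeasurable (fun ω => ∑ k ∈ Finset.range N, c k * ξ k ω) P :=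
    Finset.aemeasurable_fun_sum _ fun k _ => (hlaw k).aemeasurable.const_mul (c k)
  have hconv : TendstoInMeasure P (fun N ω => ∑ k ∈ Finset.range N, c k * ξ k ω) atTop g :=
    tendstoInMeasure_of_tendsto_eLpNorm two_ne_zero (fun N => (hS N).aestronglyMeasurable)
      hg.aestronglyMeasurable (by simp_rw [eLpNorm_sub_comm _ g]; exact hlim)
  have h := hconv.tendsto_charFun hS 1
  simp only [charFun_map_sum_mul_of_gaussianReal hlaw hindep, Complex.ofReal_one, one_pow,
    mul_one] at h
  have hcont : Continuous fun x : ℝ => Complex.exp (-(x : ℂ) / 2) := by fun_prop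
  calc ∫ ω, Complex.exp (Complex.I * (g ω : ℂ)) ∂P = charFun (P.map g) 1 := by
        rw [charFun_apply_real, integral_map hg.aemeasurable (by fun_prop)]
        simp [mul_comm]
    _ = Complex.exp (-((‖iStar i u‖ ^ 2 : ℝ) : ℂ) / 2) :=
        tendsto_nhds_unique h ((hcont.tendsto _).comp (hasSum_sq_iStar e i u).tendsto_sum_nat)
    _ = _ := by ring_nf

/-- For a sequence of independent standard Gaussians, the series
`Z u* = ∑ ⟨i e_k, u*⟩ ξ_k` converges in `L²` and has characteristic function
`E[exp(i Z u*)] = exp(-½ ‖i* u*‖²)`. -/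
theorem statement4
    (U : Type*) [NormedAddCommGroup U] [NormedSpace ℝ U]
    [TopologicalSpace.SeparableSpace U] [CompleteSpace U]
    (X : Type*) [NormedAddCommGroup X] [InnerProductSpace ℝ X]
    [TopologicalSpace.SeparableSpace X] [CompleteSpace X]
    (e : HilbertBasis ℕ ℝ X) (i : X →L[ℝ] U)
    (Ω : Type*) [MeasurableSpace Ω] (P : Measure Ω) [IsProbabilityMeasure P]
    (ξ : ℕ → Ω → ℝ) (hmeas : ∀ k, Measurable (ξ k))
    (hindep : ProbabilityTheory.iIndepFun ξ P)
    (hgauss : ∀ k, Measure.map (ξ k) P = ProbabilityTheory.gaussianReal 0 1) :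
    ∀ u : U →L[ℝ] ℝ, ∃ g : Ω → ℝ,
      MemLp g 2 P ∧
      Tendsto (fun N => eLpNorm
          (fun ω => g ω - ∑ k ∈ Finset.range N, u (i (e k)) * ξ k ω) 2 P)
        atTop (nhds 0) ∧
      ∫ ω, Complex.exp (Complex.I * (g ω : ℂ)) ∂P
        = Complex.exp (-(1 / 2) * ((‖iStar i u‖ ^ 2 : ℝ) : ℂ)) :=
  statement4_general U X e i Ω P ξ hindep hgauss
end

section
/- Let H ∈ (0,1/2), T > 0, let X be a separable real Hilbert space, and let α ∈ (1/2−H, 1/2), β > 0, C > 0. Suppose f : (0,T] → X is strongly measurable and satisfies ‖f(s)‖ ≤ C e^{−βs} for all s ∈ (0,T] and ‖f(t)−f(s)‖ ≤ C (t−s)^α s^{−α} e^{−βs} for all 0 < s ≤ t ≤ T. Then all three of the following integrals are finite: (1) ∫₀ᵀ ‖f(s)‖² (T−s)^{2H−1} ds < ∞; (2) ∫₀ᵀ ‖f(s)‖² s^{2H−1} ds < ∞; (3) ∫₀ᵀ ( ∫ₛᵀ ‖f(t)−f(s)‖ (t−s)^{H−3/2} dt )² ds ≤ C² (2β)^{2α−1}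 Γ(1−2α) (H+α−1/2)^{−2} T^{2(H+α−1/2)} < ∞. -/
/-!
Bounding `‖f‖` by `C` makes the first two integrands `C²` times an integrable power singularity,
since `2H - 1 > -1`. For the third, the Hölder bound turns the inner integrand into
`C s^{-α} e^{-βs} (t - s)^{γ - 1}` with `γ = H + α - 1/2 > 0`, so the inner integral is at most
`C s^{-α} e^{-βs} T^γ / γ`. Its square is `s^{-2α} e^{-2βs}` up to a constant, and since
`1 - 2α > 0` the integral of this over `(0, ∞)` is `(2β)^{2α-1} Γ(1 - 2α)`.
-/

open MeasureTheory Set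
open scoped ENNReal

theorem setLIntegral_ofReal_lt_top_of_le {α : Type*} [MeasurableSpace α] {μ : Measure α}
    {s : Set α} (hs : MeasurableSet s) {g b : α → ℝ} (hb : IntegrableOn b s μ)
    (hgb : ∀ x ∈ s, g x ≤ b x) :
    ∫⁻ x in s, ENNReal.ofReal (g x) ∂μ < ∞ :=
  (setLIntegral_mono' hs fun x hx => ENNReal.ofReal_le_ofReal (hgb x hx)).trans_lt
    hb.lintegral_lt_top

theorem integrableOn_sub_rpow_Ioc {a b r : ℝ} (hr : -1 < r) (hab : a ≤ b) :
    IntegrableOn (fun t => (t - a) ^ r) (Ioc a b) := by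
  have h := (intervalIntegral.intervalIntegrable_rpow' (a := 0) (b := b - a) hr).comp_sub_right a
  rw [zero_add, sub_add_cancel] at h
  exact (intervalIntegrable_iff_integrableOn_Ioc_of_le hab).mp h

theorem integrableOn_rsub_rpow_Ioc {a b r : ℝ} (hr : -1 < r) (hab : a ≤ b) :
    IntegrableOn (fun t => (b - t) ^ r) (Ioc a b) := by
  have h := (intervalIntegral.intervalIntegrable_rpow' (a := 0) (b := b - a) hr).comp_sub_left b
  rw [sub_zero, sub_sub_cancel] at h
  exact (intervalIntegrable_iff_integrableOn_Ioc_of_le hab).mp h.symm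

theorem lintegral_Ioc_sub_rpow {a b γ : ℝ} (hγ : 0 < γ) (hab : a ≤ b) :
    ∫⁻ t in Ioc a b, ENNReal.ofReal ((t - a) ^ (γ - 1)) = ENNReal.ofReal ((b - a) ^ γ / γ) := by
  have hnonneg : 0 ≤ᵐ[volume.restrict (Ioc a b)] fun t => (t - a) ^ (γ - 1) := by
    filter_upwards [ae_restrict_mem measurableSet_Ioc] with t ht
    exact Real.rpow_nonneg (sub_nonneg.2 ht.1.le) _
  rw [← ofReal_integral_eq_lintegral_ofReal (integrableOn_sub_rpow_Ioc (by linarith) hab) hnonneg,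
    ← intervalIntegral.integral_of_le hab,
    intervalIntegral.integral_comp_sub_right (fun u => u ^ (γ - 1)), sub_self,
    integral_rpow (Or.inl (by linarith)), sub_add_cancel, Real.zero_rpow hγ.ne', sub_zero]

theorem lintegral_Ioi_rpow_mul_exp_neg_mul {a r : ℝ} (ha : 0 < a) (hr : 0 < r) :
    ∫⁻ t in Ioi 0, ENNReal.ofReal (t ^ (a - 1) * Real.exp (-(r * t))) =
      ENNReal.ofReal (r ^ (-a) * Real.Gamma a) := by
  have hint : IntegrableOn (fun t => t ^ (a - 1) * Real.exp (-(r * t))) (Ioi 0) := by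
    simpa [neg_mul] using
      integrableOn_rpow_mul_exp_neg_mul_rpow (p := 1) (by linarith : -1 < a - 1) one_pos hr
  have hnonneg : 0 ≤ᵐ[volume.restrict (Ioi 0)] fun t => t ^ (a - 1) * Real.exp (-(r * t)) := by
    filter_upwards [ae_restrict_mem measurableSet_Ioi] with t ht
    exact mul_nonneg (Real.rpow_nonneg (le_of_lt ht) _) (Real.exp_pos _).le
  rw [← ofReal_integral_eq_lintegral_ofReal hint hnonneg,
    Real.integral_rpow_mul_exp_neg_mul_Ioi ha hr, one_div, Real.inv_rpow hr.le,
    Real.rpow_neg hr.le]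

section

variable {X : Type*} [SeminormedAddCommGroup X]

theorem lintegral_norm_sq_mul_lt_top {f : ℝ → X} {w : ℝ → ℝ} {s : Set ℝ} {M : ℝ}
    (hs : MeasurableSet s) (hf : ∀ x ∈ s, ‖f x‖ ≤ M) (hw : IntegrableOn w s)
    (hw_nonneg : ∀ x ∈ s, 0 ≤ w x) :
    ∫⁻ x in s, ENNReal.ofReal (‖f x‖ ^ 2 * w x) < ∞ :=
  setLIntegral_ofReal_lt_top_of_le hs (hw.const_mul (M ^ 2)) fun x hx =>
    mul_le_mul_of_nonneg_right (pow_le_pow_left₀ (norm_nonneg _) (hf x hx) 2) (hw_nonneg x hx)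

theorem lintegral_norm_sub_mul_rpow_le {f : ℝ → X} {s T α H K : ℝ} (hs : 0 ≤ s) (hsT : s ≤ T)
    (hγ : 0 < H + α - 1 / 2) (hK : 0 ≤ K)
    (hf : ∀ t ∈ Ioc s T, ‖f t - f s‖ ≤ K * (t - s) ^ α) :
    ∫⁻ t in Ioc s T, ENNReal.ofReal (‖f t - f s‖ * (t - s) ^ (H - 3 / 2)) ≤
      ENNReal.ofReal (K * (T ^ (H + α - 1 / 2) / (H + α - 1 / 2))) := by
  calc ∫⁻ t in Ioc s T, ENNReal.ofReal (‖f t - f s‖ * (t - s) ^ (H - 3 / 2))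
      ≤ ∫⁻ t in Ioc s T, ENNReal.ofReal K * ENNReal.ofReal ((t - s) ^ (H + α - 1 / 2 - 1)) := by
        refine setLIntegral_mono' measurableSet_Ioc fun t ht => ?_
        have hts : 0 < t - s := sub_pos.2 ht.1
        rw [← ENNReal.ofReal_mul hK]
        refine ENNReal.ofReal_le_ofReal ?_
        calc ‖f t - f s‖ * (t - s) ^ (H - 3 / 2)
            ≤ K * (t - s) ^ α * (t - s) ^ (H - 3 / 2) := by gcongr; exact hf t ht
          _ = K * (t - s) ^ (H + α - 1 / 2 - 1) := by
            rw [mul_assoc, ← Real.rpow_add hts]; ring_nf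
    _ = ENNReal.ofReal (K * ((T - s) ^ (H + α - 1 / 2) / (H + α - 1 / 2))) := by
        rw [lintegral_const_mul' _ _ ENNReal.ofReal_ne_top, lintegral_Ioc_sub_rpow hγ hsT,
          ENNReal.ofReal_mul hK]
    _ ≤ ENNReal.ofReal (K * (T ^ (H + α - 1 / 2) / (H + α - 1 / 2))) := by
        gcongr
        linarith

end

theorem lintegral_Ioc_sq_le_of_le_rpow_mul_exp {g : ℝ → ℝ≥0∞} {T α β K : ℝ} (hα : α < 1 / 2)
    (hβ : 0 < β) (hK : 0 ≤ K)
    (hg : ∀ s ∈ Ioc 0 T, g s ≤ ENNReal.ofReal (K * s ^ (-α) * Real.exp (-β * s))) :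
    ∫⁻ s in Ioc 0 T, g s ^ 2 ≤
      ENNReal.ofReal (K ^ 2 * (2 * β) ^ (2 * α - 1) * Real.Gamma (1 - 2 * α)) := by
  have hsq : ∀ s ∈ Ioc (0 : ℝ) T, g s ^ 2 ≤
      ENNReal.ofReal (K ^ 2) * ENNReal.ofReal (s ^ (1 - 2 * α - 1) * Real.exp (-(2 * β * s))) := by
    intro s hs
    have hs0 : 0 < s := hs.1
    have hpow : (s ^ (-α)) ^ 2 = s ^ (1 - 2 * α - 1) := by
      rw [← Real.rpow_mul_natCast hs0.le]; ring_nf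
    have hexp : Real.exp (-β * s) ^ 2 = Real.exp (-(2 * β * s)) := by
      rw [← Real.exp_nat_mul]; ring_nf
    calc g s ^ 2 ≤ ENNReal.ofReal (K * s ^ (-α) * Real.exp (-β * s)) ^ 2 :=
          pow_le_pow_left' (hg s hs) 2
      _ = _ := by
        rw [← ENNReal.ofReal_pow (by positivity), ← ENNReal.ofReal_mul (sq_nonneg K), mul_pow,
          mul_pow, hpow, hexp, mul_assoc]
  calc ∫⁻ s in Ioc 0 T, g s ^ 2
      ≤ ∫⁻ s in Ioc 0 T, ENNReal.ofReal (K ^ 2) *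
          ENNReal.ofReal (s ^ (1 - 2 * α - 1) * Real.exp (-(2 * β * s))) :=
        setLIntegral_mono' measurableSet_Ioc hsq
    _ ≤ ∫⁻ s in Ioi 0, ENNReal.ofReal (K ^ 2) *
          ENNReal.ofReal (s ^ (1 - 2 * α - 1) * Real.exp (-(2 * β * s))) :=
        lintegral_mono_set Ioc_subset_Ioi_self
    _ = ENNReal.ofReal (K ^ 2 * (2 * β) ^ (2 * α - 1) * Real.Gamma (1 - 2 * α)) := by
        rw [lintegral_const_mul' _ _ ENNReal.ofReal_ne_top,
          lintegral_Ioi_rpow_mul_exp_neg_mul (by linarith) (by linarith), neg_sub,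
          ← ENNReal.ofReal_mul (sq_nonneg K), mul_assoc]

theorem statement9_general (H T : ℝ) (hH : H ∈ Set.Ioo (0 : ℝ) (1 / 2)) (hT : 0 < T)
    (X : Type*) [NormedAddCommGroup X]
    (α β C : ℝ) (hα : α ∈ Set.Ioo (1 / 2 - H) (1 / 2)) (hβ : 0 < β) (hC : 0 < C)
    (f : ℝ → X)
    (hbd : ∀ s ∈ Set.Ioc (0 : ℝ) T, ‖f s‖ ≤ C * Real.exp (-β * s))
    (hHol : ∀ s t : ℝ, 0 < s → s ≤ t → t ≤ T →
      ‖f t - f s‖ ≤ C * (t - s) ^ α * s ^ (-α) * Real.exp (-β * s)) :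
    (∫⁻ s in Set.Ioc (0 : ℝ) T, ENNReal.ofReal (‖f s‖ ^ 2 * (T - s) ^ (2 * H - 1))) < ⊤ ∧
    (∫⁻ s in Set.Ioc (0 : ℝ) T, ENNReal.ofReal (‖f s‖ ^ 2 * s ^ (2 * H - 1))) < ⊤ ∧
    (∫⁻ s in Set.Ioc (0 : ℝ) T,
        (∫⁻ t in Set.Ioc s T, ENNReal.ofReal (‖f t - f s‖ * (t - s) ^ (H - 3 / 2))) ^ 2)
      ≤ ENNReal.ofReal (C ^ 2 * (2 * β) ^ (2 * α - 1) * Real.Gamma (1 - 2 * α) *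
          T ^ (2 * (H + α - 1 / 2)) / (H + α - 1 / 2) ^ 2) := by
  obtain ⟨hH0, -⟩ := hH
  obtain ⟨hα1, hα2⟩ := hα
  have hfC : ∀ s ∈ Ioc (0 : ℝ) T, ‖f s‖ ≤ C := fun s hs =>
    (hbd s hs).trans <| mul_le_of_le_one_right hC.le <|
      Real.exp_le_one_iff.2 (by nlinarith [hs.1])
  have h2H : -1 < 2 * H - 1 := by linarith
  refine ⟨lintegral_norm_sq_mul_lt_top measurableSet_Ioc hfC
      (integrableOn_rsub_rpow_Ioc h2H hT.le) fun s hs => Real.rpow_nonneg (sub_nonneg.2 hs.2) _,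
    lintegral_norm_sq_mul_lt_top measurableSet_Ioc hfC
      (by simpa using integrableOn_sub_rpow_Ioc (a := 0) h2H hT.le)
      fun s hs => Real.rpow_nonneg hs.1.le _, ?_⟩
  have hγ : 0 < H + α - 1 / 2 := by linarith
  have hinner : ∀ s ∈ Ioc (0 : ℝ) T,
      ∫⁻ t in Ioc s T, ENNReal.ofReal (‖f t - f s‖ * (t - s) ^ (H - 3 / 2)) ≤
        ENNReal.ofReal (C * T ^ (H + α - 1 / 2) / (H + α - 1 / 2) * s ^ (-α) *
          Real.exp (-β * s)) := by
    rintro s ⟨hs0, hsT⟩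
    refine (lintegral_norm_sub_mul_rpow_le (K := C * s ^ (-α) * Real.exp (-β * s)) hs0.le hsT hγ
      (by positivity) fun t ht => (hHol s t hs0 ht.1.le ht.2).trans_eq (by ring)).trans_eq ?_
    congr 1
    ring
  set γ := H + α - 1 / 2
  clear_value γ
  calc _ ≤ ENNReal.ofReal ((C * T ^ γ / γ) ^ 2 * (2 * β) ^ (2 * α - 1) * Real.Gamma (1 - 2 * α)) :=
        lintegral_Ioc_sq_le_of_le_rpow_mul_exp hα2 hβ (div_nonneg (by positivity) hγ.le) hinner
    _ = _ := by
        have hT2 : T ^ (2 * γ) = (T ^ γ) ^ 2 := by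
          rw [mul_comm, ← Real.rpow_mul_natCast hT.le]; norm_num
        rw [hT2]
        congr 1
        ring

/-- Integrability estimates for Hölder-continuous, exponentially decaying functions,
as needed for `s ↦ i* C* S*(s) v*` with an analytic semigroup of negative type
and `H < 1/2`. -/
theorem statement9 (H T : ℝ) (hH : H ∈ Set.Ioo (0 : ℝ) (1 / 2)) (hT : 0 < T)
    (X : Type*) [NormedAddCommGroup X]
    (α β C : ℝ) (hα : α ∈ Set.Ioo (1 / 2 - H) (1 / 2)) (hβ : 0 < β) (hC : 0 < C)
    (f : ℝ → X) (hf : AEStronglyMeasurable f (volume.restrict (Set.Ioc 0 T)))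
    (hbd : ∀ s ∈ Set.Ioc (0 : ℝ) T, ‖f s‖ ≤ C * Real.exp (-β * s))
    (hHol : ∀ s t : ℝ, 0 < s → s ≤ t → t ≤ T →
      ‖f t - f s‖ ≤ C * (t - s) ^ α * s ^ (-α) * Real.exp (-β * s)) :
    (∫⁻ s in Set.Ioc (0 : ℝ) T, ENNReal.ofReal (‖f s‖ ^ 2 * (T - s) ^ (2 * H - 1))) < ⊤ ∧
    (∫⁻ s in Set.Ioc (0 : ℝ) T, ENNReal.ofReal (‖f s‖ ^ 2 * s ^ (2 * H - 1))) < ⊤ ∧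
    (∫⁻ s in Set.Ioc (0 : ℝ) T,
        (∫⁻ t in Set.Ioc s T, ENNReal.ofReal (‖f t - f s‖ * (t - s) ^ (H - 3 / 2))) ^ 2)
      ≤ ENNReal.ofReal (C ^ 2 * (2 * β) ^ (2 * α - 1) * Real.Gamma (1 - 2 * α) *
          T ^ (2 * (H + α - 1 / 2)) / (H + α - 1 / 2) ^ 2) :=
  statement9_general H T hH hT X α β C hα hβ hC f hbd hHol
end

section
/- Let H ∈ (0,1/2). There exists a constant c > 0 depending only on H such that for every λ > 0 and every T > 0, ∫₀ᵀ ( ∫ₛᵀ (e^{−λ s} − e^{−λ t}) (t−s)^{H−3/2} dt )² ds ≤ c·λ^{−2H}. -/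
open MeasureTheory Set Real
open scoped ENNReal

/-!
Since `e^{-λs} - e^{-λt} ≤ e^{-λs} min (λ(t-s), 1)`, the inner integral is at most `e^{-λs}` times
`∫₀^∞ min (λu, 1) u^{H-3/2} du = C λ^{1/2-H}` with `C = 1/(H+1/2) + 1/(1/2-H)`, the two terms
coming from the regimes `u ≤ 1/λ` and `u > 1/λ`. Squaring and integrating `e^{-2λs}` over
`(0, ∞)` gives the bound `C² λ^{-2H} / 2`.
-/

lemma one_sub_exp_neg_le_min (x : ℝ) : 1 - exp (-x) ≤ min x 1 :=
  le_min (by linarith [add_one_le_exp (-x)]) (by linarith [exp_pos (-x)])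

lemma exp_neg_mul_sub_exp_neg_mul_le (l s t : ℝ) :
    exp (-l * s) - exp (-l * t) ≤ exp (-l * s) * min (l * (t - s)) 1 := by
  have hsplit : exp (-l * t) = exp (-l * s) * exp (-(l * (t - s))) := by
    rw [← exp_add]; ring_nf
  rw [hsplit, ← mul_one_sub]
  exact mul_le_mul_of_nonneg_left (one_sub_exp_neg_le_min _) (exp_pos _).le

lemma setLIntegral_Ioi_comp_sub (f : ℝ → ℝ≥0∞) (s : ℝ) :
    ∫⁻ t in Ioi s, f (t - s) = ∫⁻ u in Ioi 0, f u := by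
  have h := (measurePreserving_add_right volume s).setLIntegral_comp_preimage_emb
    (measurableEmbedding_addRight s) (fun t => f (t - s)) (Ioi s)
  have hpre : (· + s) ⁻¹' Ioi s = Ioi (0 : ℝ) := by ext; simp
  simpa [hpre] using h.symm

lemma lintegral_Ioc_zero_rpow {r b : ℝ} (hr : -1 < r) (hb : 0 ≤ b) :
    ∫⁻ u in Ioc 0 b, ENNReal.ofReal (u ^ r) = ENNReal.ofReal (b ^ (r + 1) / (r + 1)) := by
  have hint : IntegrableOn (fun u : ℝ => u ^ r) (Ioc 0 b) :=
    (intervalIntegrable_iff_integrableOn_Ioc_of_le hb).mp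
      (intervalIntegral.intervalIntegrable_rpow' hr)
  rw [← ofReal_integral_eq_lintegral_ofReal hint
    ((ae_restrict_iff' measurableSet_Ioc).mpr (ae_of_all _ fun u hu => rpow_nonneg hu.1.le r)),
    ← intervalIntegral.integral_of_le hb, integral_rpow (Or.inl hr),
    zero_rpow (by linarith), sub_zero]

lemma lintegral_Ioi_rpow {r c : ℝ} (hr : r < -1) (hc : 0 < c) :
    ∫⁻ u in Ioi c, ENNReal.ofReal (u ^ r) = ENNReal.ofReal (-c ^ (r + 1) / (r + 1)) := by
  rw [← ofReal_integral_eq_lintegral_ofReal (integrableOn_Ioi_rpow_of_lt hr hc)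
    ((ae_restrict_iff' measurableSet_Ioi).mpr
      (ae_of_all _ fun u hu => rpow_nonneg (hc.trans hu).le r)),
    integral_Ioi_rpow_of_lt hr hc]

lemma lintegral_Ioi_exp_mul {a : ℝ} (ha : a < 0) (c : ℝ) :
    ∫⁻ x in Ioi c, ENNReal.ofReal (exp (a * x)) = ENNReal.ofReal (-exp (a * c) / a) := by
  rw [← ofReal_integral_eq_lintegral_ofReal (integrableOn_exp_mul_Ioi ha c)
    (ae_of_all _ fun _ => (exp_pos _).le), integral_exp_mul_Ioi ha c]

lemma lintegral_Ioi_min_mul_rpow {H l : ℝ} (hH : H ∈ Ioo (-1 / 2) (1 / 2)) (hl : 0 < l) :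
    ∫⁻ u in Ioi 0, ENNReal.ofReal (min (l * u) 1 * u ^ (H - 3 / 2))
      = ENNReal.ofReal ((1 / (H + 1 / 2) + 1 / (1 / 2 - H)) * l ^ (1 / 2 - H)) := by
  obtain ⟨hH₁, hH₂⟩ := hH
  have ha : 0 < H + 1 / 2 := by linarith
  have hb : 0 < 1 / 2 - H := by linarith
  have hl' : 0 < l⁻¹ := inv_pos.2 hl
  have hinv : ∀ x : ℝ, l⁻¹ ^ x = l ^ (-x) := fun x => by rw [inv_rpow hl.le, rpow_neg hl.le]
  have hnear : ∫⁻ u in Ioc 0 l⁻¹, ENNReal.ofReal (min (l * u) 1 * u ^ (H - 3 / 2))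
      = ENNReal.ofReal (l ^ (1 / 2 - H) / (H + 1 / 2)) := calc
    _ = ∫⁻ u in Ioc 0 l⁻¹, ENNReal.ofReal l * ENNReal.ofReal (u ^ (H - 1 / 2)) := by
      refine setLIntegral_congr_fun measurableSet_Ioc fun u hu => ?_
      have hlu : l * u ≤ 1 := by
        simpa [hl.ne'] using mul_le_mul_of_nonneg_left hu.2 hl.le
      rw [min_eq_left hlu, ← ENNReal.ofReal_mul hl.le, mul_assoc,
        show H - 1 / 2 = 1 + (H - 3 / 2) by ring, rpow_add hu.1, rpow_one]
    _ = ENNReal.ofReal (l * (l⁻¹ ^ (H - 1 / 2 + 1) / (H - 1 / 2 + 1))) := by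
      rw [lintegral_const_mul' _ _ ENNReal.ofReal_ne_top,
        lintegral_Ioc_zero_rpow (by linarith) hl'.le, ← ENNReal.ofReal_mul hl.le]
    _ = _ := by
      rw [hinv, mul_div_assoc', show H - 1 / 2 + 1 = H + 1 / 2 by ring]
      congr 2
      rw [← rpow_one_add' hl.le (by linarith)]; ring_nf
  have hfar : ∫⁻ u in Ioi l⁻¹, ENNReal.ofReal (min (l * u) 1 * u ^ (H - 3 / 2))
      = ENNReal.ofReal (l ^ (1 / 2 - H) / (1 / 2 - H)) := calc
    _ = ∫⁻ u in Ioi l⁻¹, ENNReal.ofReal (u ^ (H - 3 / 2)) := by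
      refine setLIntegral_congr_fun measurableSet_Ioi fun u hu => ?_
      have hlu : 1 ≤ l * u := by
        simpa [hl.ne'] using mul_le_mul_of_nonneg_left hu.le hl.le
      rw [min_eq_right hlu, one_mul]
    _ = _ := by
      rw [lintegral_Ioi_rpow (by linarith) hl', hinv, show H - 3 / 2 + 1 = -(1 / 2 - H) by ring,
        neg_neg, neg_div_neg_eq]
  rw [← Ioc_union_Ioi_eq_Ioi hl'.le, lintegral_union measurableSet_Ioi (Ioc_disjoint_Ioi le_rfl),
    hnear, hfar, ← ENNReal.ofReal_add (by positivity) (by positivity)]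
  ring_nf

lemma lintegral_Ioc_exp_sub_exp_mul_rpow_le {H l : ℝ} (hH : H ∈ Ioo (-1 / 2) (1 / 2))
    (hl : 0 < l) (s T : ℝ) :
    ∫⁻ t in Ioc s T, ENNReal.ofReal ((exp (-l * s) - exp (-l * t)) * (t - s) ^ (H - 3 / 2))
      ≤ ENNReal.ofReal (exp (-l * s))
        * ENNReal.ofReal ((1 / (H + 1 / 2) + 1 / (1 / 2 - H)) * l ^ (1 / 2 - H)) := calc
  _ ≤ ∫⁻ t in Ioi s, ENNReal.ofReal (exp (-l * s))
        * ENNReal.ofReal (min (l * (t - s)) 1 * (t - s) ^ (H - 3 / 2)) := by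
    refine (lintegral_mono_set Ioc_subset_Ioi_self).trans
      (setLIntegral_mono' measurableSet_Ioi fun t ht => ?_)
    rw [← ENNReal.ofReal_mul (exp_pos _).le, ← mul_assoc]
    exact ENNReal.ofReal_le_ofReal (mul_le_mul_of_nonneg_right
      (exp_neg_mul_sub_exp_neg_mul_le l s t) (rpow_nonneg (sub_pos.2 ht).le _))
  _ = _ := by
    rw [lintegral_const_mul' _ _ ENNReal.ofReal_ne_top,
      setLIntegral_Ioi_comp_sub (fun u => ENNReal.ofReal (min (l * u) 1 * u ^ (H - 3 / 2))) s,
      lintegral_Ioi_min_mul_rpow hH hl]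

/-- For `H < 1/2` there is a constant `c > 0` depending only on `H` such that
`∫₀ᵀ (∫ₛᵀ (e^{-λs} - e^{-λt}) (t-s)^{H-3/2} dt)² ds ≤ c λ^{-2H}`. -/
theorem statement13 (H : ℝ) (hH : H ∈ Set.Ioo (0 : ℝ) (1 / 2)) :
    ∃ c > (0 : ℝ), ∀ l T : ℝ, 0 < l → 0 < T →
      (∫⁻ s in Set.Ioc (0 : ℝ) T,
          (∫⁻ t in Set.Ioc s T,
            ENNReal.ofReal ((Real.exp (-l * s) - Real.exp (-l * t)) * (t - s) ^ (H - 3 / 2))) ^ 2)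
        ≤ ENNReal.ofReal (c * l ^ (-(2 * H))) := by
  obtain ⟨hH₀, hH₁⟩ := hH
  set C := 1 / (H + 1 / 2) + 1 / (1 / 2 - H)
  refine ⟨C ^ 2 / 2, by positivity, fun l T hl _ => ?_⟩
  calc _ ≤ ∫⁻ s in Ioi 0,
          (ENNReal.ofReal (exp (-l * s)) * ENNReal.ofReal (C * l ^ (1 / 2 - H))) ^ 2 :=
        (lintegral_mono fun s => pow_le_pow_left'
          (lintegral_Ioc_exp_sub_exp_mul_rpow_le ⟨by linarith, hH₁⟩ hl s T) 2).trans
          (lintegral_mono_set Ioc_subset_Ioi_self)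
    _ = (∫⁻ s in Ioi 0, ENNReal.ofReal (exp (-(2 * l) * s)))
          * ENNReal.ofReal (C * l ^ (1 / 2 - H)) ^ 2 := by
        rw [← lintegral_mul_const' _ _ (by simp)]
        refine lintegral_congr fun s => ?_
        rw [mul_pow, ← ENNReal.ofReal_pow (exp_pos _).le, ← exp_nat_mul]
        ring_nf
    _ = ENNReal.ofReal (C ^ 2 / 2 * l ^ (-(2 * H))) := by
        rw [lintegral_Ioi_exp_mul (by linarith), mul_zero, exp_zero, neg_div_neg_eq,
          ← ENNReal.ofReal_pow (by positivity), ← ENNReal.ofReal_mul (by positivity)]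
        congr 1
        rw [mul_pow, ← rpow_mul_natCast hl.le,
          show (1 / 2 - H) * ((2 : ℕ) : ℝ) = 1 + -(2 * H) by push_cast; ring, rpow_add hl, rpow_one]
        field_simp
end

section
/- Let H ∈ (0,1/2). There exists a constant c > 0 depending only on H such that for every a > 0, ∫₀ᵃ e^{−2(a−x)} ( ∫₀ˣ (1−e^{−y}) y^{H−3/2} dy )² dx ≤ c. -/
open MeasureTheory Set
open scoped ENNReal

/-!
The inner integrals increase to `M = ∫₀^∞ (1 - e^{-y}) y^{H-3/2} dy`, which is finite: near `0` the
integrand is at most `y^{H-1/2}` (as `1 - e^{-y} ≤ y`) and `H - 1/2 > -1`; near `∞` it is at most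
`y^{H-3/2}` and `H - 3/2 < -1`. The weight `e^{-2(a-x)}` has mass at most `1/2` on `(0, a]`, so the
whole expression is at most `M² / 2` uniformly in `a`.
-/

namespace OneSubExpRpow

lemma lintegral_Ioc_zero_one_lt_top {s : ℝ} (hs : -2 < s) :
    ∫⁻ y in Ioc (0 : ℝ) 1, ENNReal.ofReal ((1 - Real.exp (-y)) * y ^ s) < ⊤ := by
  have hle : ∀ y ∈ Ioc (0 : ℝ) 1,
      ENNReal.ofReal ((1 - Real.exp (-y)) * y ^ s) ≤ ENNReal.ofReal (y ^ (s + 1)) := by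
    intro y ⟨hy, _⟩
    apply ENNReal.ofReal_le_ofReal
    calc (1 - Real.exp (-y)) * y ^ s ≤ y * y ^ s := by
          gcongr
          linarith [Real.add_one_le_exp (-y)]
      _ = y ^ (s + 1) := by rw [Real.rpow_add_one hy.ne', mul_comm]
  have hint : IntegrableOn (fun y : ℝ => y ^ (s + 1)) (Ioc 0 1) :=
    (intervalIntegrable_iff_integrableOn_Ioc_of_le zero_le_one).1
      (intervalIntegral.intervalIntegrable_rpow' (by linarith))
  exact (setLIntegral_mono' measurableSet_Ioc hle).trans_lt hint.lintegral_lt_top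

lemma lintegral_Ioi_one_lt_top {s : ℝ} (hs : s < -1) :
    ∫⁻ y in Ioi (1 : ℝ), ENNReal.ofReal ((1 - Real.exp (-y)) * y ^ s) < ⊤ := by
  have hle : ∀ y ∈ Ioi (1 : ℝ),
      ENNReal.ofReal ((1 - Real.exp (-y)) * y ^ s) ≤ ENNReal.ofReal (y ^ s) := by
    intro y hy
    apply ENNReal.ofReal_le_ofReal
    have hy0 : 0 < y := one_pos.trans hy
    calc (1 - Real.exp (-y)) * y ^ s ≤ 1 * y ^ s := by
          gcongr
          linarith [Real.exp_pos (-y)]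
      _ = y ^ s := one_mul _
  exact (setLIntegral_mono' measurableSet_Ioi hle).trans_lt
    (integrableOn_Ioi_rpow_of_lt hs one_pos).lintegral_lt_top

lemma lintegral_Ioi_zero_lt_top {s : ℝ} (hs : s ∈ Ioo (-2 : ℝ) (-1)) :
    ∫⁻ y in Ioi (0 : ℝ), ENNReal.ofReal ((1 - Real.exp (-y)) * y ^ s) < ⊤ := by
  rw [← Ioc_union_Ioi_eq_Ioi zero_le_one,
    lintegral_union measurableSet_Ioi (Ioc_disjoint_Ioi le_rfl)]
  exact ENNReal.add_lt_top.2 ⟨lintegral_Ioc_zero_one_lt_top hs.1, lintegral_Ioi_one_lt_top hs.2⟩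

end OneSubExpRpow

lemma integral_exp_neg_mul_sub {c : ℝ} (hc : c ≠ 0) (a : ℝ) :
    ∫ x in (0 : ℝ)..a, Real.exp (-c * (a - x)) = (1 - Real.exp (-c * a)) / c := by
  have hderiv : ∀ x ∈ uIcc (0 : ℝ) a,
      HasDerivAt (fun x => Real.exp (-c * (a - x)) / c) (Real.exp (-c * (a - x))) x := by
    intro x _
    have h := (((hasDerivAt_id x).const_sub a).const_mul (-c)).exp.div_const c
    exact h.congr_deriv (by field_simp; simp)
  rw [intervalIntegral.integral_eq_sub_of_hasDerivAt hderiv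
    ((by fun_prop : Continuous fun x => Real.exp (-c * (a - x))).intervalIntegrable 0 a)]
  simp [sub_div]

lemma lintegral_Ioc_exp_neg_mul_sub_le {c : ℝ} (hc : 0 < c) {a : ℝ} (ha : 0 ≤ a) :
    ∫⁻ x in Ioc 0 a, ENNReal.ofReal (Real.exp (-c * (a - x))) ≤ ENNReal.ofReal (1 / c) := by
  have hint : IntegrableOn (fun x => Real.exp (-c * (a - x))) (Ioc 0 a) :=
    (by fun_prop : Continuous fun x => Real.exp (-c * (a - x))).integrableOn_Ioc
  rw [← ofReal_integral_eq_lintegral_ofReal hint (.of_forall fun x => (Real.exp_pos _).le),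
    ← intervalIntegral.integral_of_le ha, integral_exp_neg_mul_sub hc.ne']
  gcongr
  linarith [Real.exp_pos (-c * a)]

/-- For `H < 1/2` there is a constant `c > 0` depending only on `H` such that for all `a > 0`:
`∫₀ᵃ e^{-2(a-x)} (∫₀ˣ (1-e^{-y}) y^{H-3/2} dy)² dx ≤ c`. -/
theorem statement14 (H : ℝ) (hH : H ∈ Set.Ioo (0 : ℝ) (1 / 2)) :
    ∃ c > (0 : ℝ), ∀ a : ℝ, 0 < a →
      (∫⁻ x in Set.Ioc (0 : ℝ) a, ENNReal.ofReal (Real.exp (-2 * (a - x))) *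
          (∫⁻ y in Set.Ioc (0 : ℝ) x,
            ENNReal.ofReal ((1 - Real.exp (-y)) * y ^ (H - 3 / 2))) ^ 2)
        ≤ ENNReal.ofReal c := by
  set g : ℝ → ℝ≥0∞ := fun y => ENNReal.ofReal ((1 - Real.exp (-y)) * y ^ (H - 3 / 2))
  set M := ∫⁻ y in Ioi (0 : ℝ), g y
  have hM : M ≠ ⊤ :=
    (OneSubExpRpow.lintegral_Ioi_zero_lt_top ⟨by linarith [hH.1], by linarith [hH.2]⟩).ne
  refine ⟨M.toReal ^ 2 / 2 + 1, by positivity, fun a ha => ?_⟩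
  have hinner : ∀ x, ∫⁻ y in Ioc 0 x, g y ≤ M := fun x => lintegral_mono_set fun y hy => hy.1
  calc ∫⁻ x in Ioc 0 a, ENNReal.ofReal (Real.exp (-2 * (a - x))) * (∫⁻ y in Ioc 0 x, g y) ^ 2
      ≤ ∫⁻ x in Ioc 0 a, ENNReal.ofReal (Real.exp (-2 * (a - x))) * M ^ 2 := by
        gcongr with x
        exact hinner x
    _ = (∫⁻ x in Ioc 0 a, ENNReal.ofReal (Real.exp (-2 * (a - x)))) * M ^ 2 :=
        lintegral_mul_const' _ _ (ENNReal.pow_ne_top hM)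
    _ ≤ ENNReal.ofReal (1 / 2) * ENNReal.ofReal (M.toReal ^ 2) := by
        rw [ENNReal.ofReal_pow ENNReal.toReal_nonneg, ENNReal.ofReal_toReal hM]
        gcongr
        exact lintegral_Ioc_exp_neg_mul_sub_le two_pos ha.le
    _ ≤ ENNReal.ofReal (M.toReal ^ 2 / 2 + 1) := by
        rw [← ENNReal.ofReal_mul (by norm_num)]
        exact ENNReal.ofReal_le_ofReal (by linarith)
end

section
/- Let D ∈ ℬ(ℝⁿ) be a Borel set, let (e_k)_{k∈ℕ} be an orthonormal basis of L²(D;ℝ), and let (τ_k)_{k∈ℕ} ⊆ L²(D;ℝ) satisfy ∑_{k=1}^∞ ‖τ_k‖²_{L²} < ∞. Then for every f ∈ L²(D;ℝ) the series i f := ∑_{k=1}^∞ ⟨e_k, f⟩_{L²} · τ_k(·) e_k(·) converges absolutely in L¹(D;ℝ), and the map i : L²(D;ℝ) → L¹(D;ℝ) so defined is linear and bounded with ‖i f‖_{L¹} ≤ (∑_{k=1}^∞ ‖τ_k‖²_{L²})^{1/2} ‖f‖_{L²}. -/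
/-!
With `c = (⟪e k, f⟫)ₖ ∈ ℓ²`, of norm `‖f‖` by Parseval, the map is the isometry `f ↦ c` followed
by the synthesis map `c ↦ ∑ c k • T k` with `T k = τ k • e k ∈ L¹`. Hölder gives
`‖T k‖₁ ≤ ‖τ k‖₂ ‖e k‖₂ = ‖τ k‖₂`, and Cauchy–Schwarz in `ℓ²` bounds `∑ |c k| ‖T k‖₁` by
`(∑ ‖τ k‖₂²)^{1/2} ‖c‖`, which gives absolute convergence and the norm bound at once.
-/

open MeasureTheory Filter Set
open scoped ENNReal Topology lp

theorem Real.summable_mul_and_tsum_mul_le_sqrt_mul_sqrt {ι : Type*} {a b : ι → ℝ}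
    (ha : ∀ i, 0 ≤ a i) (hb : ∀ i, 0 ≤ b i)
    (ha2 : Summable fun i => a i ^ 2) (hb2 : Summable fun i => b i ^ 2) :
    (Summable fun i => a i * b i) ∧
      ∑' i, a i * b i ≤ √(∑' i, a i ^ 2) * √(∑' i, b i ^ 2) := by
  simpa [Real.sqrt_eq_rpow] using Real.summable_and_inner_le_Lp_mul_Lq_tsum_of_nonneg
    Real.HolderConjugate.two_two ha hb (by simpa using ha2) (by simpa using hb2)

namespace lp

variable {ι 𝕜 F : Type*} [RCLike 𝕜] [NormedAddCommGroup F] {T : ι → F}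

theorem hasSum_norm_sq (c : ℓ²(ι, 𝕜)) : HasSum (fun k => ‖c k‖ ^ 2) (‖c‖ ^ 2) := by
  simpa using lp.hasSum_norm (p := 2) (by norm_num) c

theorem summable_norm_mul_norm (hT : Summable fun k => ‖T k‖ ^ 2) (c : ℓ²(ι, 𝕜)) :
    Summable fun k => ‖c k‖ * ‖T k‖ :=
  (Real.summable_mul_and_tsum_mul_le_sqrt_mul_sqrt (fun _ => norm_nonneg _)
    (fun _ => norm_nonneg _) (hasSum_norm_sq c).summable hT).1

variable [NormedSpace 𝕜 F]

theorem norm_tsum_smul_le (hT : Summable fun k => ‖T k‖ ^ 2) (c : ℓ²(ι, 𝕜)) :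
    ‖∑' k, c k • T k‖ ≤ √(∑' k, ‖T k‖ ^ 2) * ‖c‖ :=
  calc ‖∑' k, c k • T k‖ ≤ ∑' k, ‖c k‖ * ‖T k‖ :=
        tsum_of_norm_bounded (summable_norm_mul_norm hT c).hasSum fun _ => norm_smul_le _ _
    _ ≤ √(∑' k, ‖c k‖ ^ 2) * √(∑' k, ‖T k‖ ^ 2) :=
        (Real.summable_mul_and_tsum_mul_le_sqrt_mul_sqrt (fun _ => norm_nonneg _)
          (fun _ => norm_nonneg _) (hasSum_norm_sq c).summable hT).2
    _ = √(∑' k, ‖T k‖ ^ 2) * ‖c‖ := by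
        rw [(hasSum_norm_sq c).tsum_eq, Real.sqrt_sq (norm_nonneg c), mul_comm]

variable [CompleteSpace F]

theorem summable_smul (hT : Summable fun k => ‖T k‖ ^ 2) (c : ℓ²(ι, 𝕜)) :
    Summable fun k => c k • T k :=
  .of_norm_bounded (summable_norm_mul_norm hT c) fun _ => norm_smul_le _ _

noncomputable def synthesis (T : ι → F) (hT : Summable fun k => ‖T k‖ ^ 2) :
    ℓ²(ι, 𝕜) →L[𝕜] F :=
  LinearMap.mkContinuous
    { toFun := fun c => ∑' k, c k • T k
      map_add' := fun c d => by
        simp only [lp.coeFn_add, Pi.add_apply, add_smul]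
        exact (summable_smul hT c).tsum_add (summable_smul hT d)
      map_smul' := fun a c => by
        simp only [lp.coeFn_smul, Pi.smul_apply, smul_eq_mul, mul_smul, RingHom.id_apply]
        exact (summable_smul hT c).tsum_const_smul a }
    _ (norm_tsum_smul_le hT)

theorem hasSum_synthesis (hT : Summable fun k => ‖T k‖ ^ 2) (c : ℓ²(ι, 𝕜)) :
    HasSum (fun k => c k • T k) (synthesis T hT c) :=
  (summable_smul hT c).hasSum

theorem norm_synthesis_apply_le (hT : Summable fun k => ‖T k‖ ^ 2) (c : ℓ²(ι, 𝕜)) :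
    ‖synthesis T hT c‖ ≤ √(∑' k, ‖T k‖ ^ 2) * ‖c‖ :=
  norm_tsum_smul_le hT c

end lp

namespace MeasureTheory.Lp

variable {α E : Type*} {m : MeasurableSpace α} {μ : Measure α} {p : ℝ≥0∞} [Fact (1 ≤ p)]
  [NormedAddCommGroup E]

theorem tendsto_eLpNorm_sub_sum_range {g : ℕ → Lp E p μ} {s : Lp E p μ} {G : ℕ → α → E}
    (hs : HasSum g s) (hG : ∀ k, g k =ᵐ[μ] G k) :
    Tendsto (fun N => eLpNorm (fun x => s x - ∑ k ∈ Finset.range N, G k x) p μ) atTop (𝓝 0) := by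
  refine ((tendsto_Lp_iff_tendsto_eLpNorm' _ s).1 hs.tendsto_sum_nat).congr fun N => ?_
  rw [eLpNorm_sub_comm]
  refine eLpNorm_congr_ae ((EventuallyEq.refl _ _).sub ?_)
  exact (coeFn_finsetSum _ g).trans
    ((eventuallyEq_sum fun k _ => hG k).trans (.of_eq (Finset.sum_fn _ _)))

end MeasureTheory.Lp

theorem statement16_general (n : ℕ) (D : Set (Fin n → ℝ))
    (e : HilbertBasis ℕ ℝ (Lp ℝ 2 (volume.restrict D)))
    (τ : ℕ → Lp ℝ 2 (volume.restrict D))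
    (hτ : Summable fun k => ‖τ k‖ ^ 2) :
    ∃ I : Lp ℝ 2 (volume.restrict D) →L[ℝ] Lp ℝ 1 (volume.restrict D),
      ∀ f : Lp ℝ 2 (volume.restrict D),
        (Summable fun k => |(inner ℝ (e k) f : ℝ)| *
          (eLpNorm (fun x => (τ k : (Fin n → ℝ) → ℝ) x *
            ((e k : Lp ℝ 2 (volume.restrict D)) : (Fin n → ℝ) → ℝ) x) 1
            (volume.restrict D)).toReal) ∧
        Tendsto (fun N => eLpNorm (fun x => (I f : (Fin n → ℝ) → ℝ) x -
            ∑ k ∈ Finset.range N, (inner ℝ (e k) f : ℝ) *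
              ((τ k : (Fin n → ℝ) → ℝ) x *
                ((e k : Lp ℝ 2 (volume.restrict D)) : (Fin n → ℝ) → ℝ) x)) 1
            (volume.restrict D)) atTop (nhds 0) ∧
        ‖I f‖ ≤ Real.sqrt (∑' k, ‖τ k‖ ^ 2) * ‖f‖ := by
  let T : ℕ → Lp ℝ 1 (volume.restrict D) := fun k => τ k • e k
  have hT_coe : ∀ k, T k =ᵐ[volume.restrict D] fun x => τ k x * e k x :=
    fun k => Lp.coeFn_lpSMul _ _
  have hT_le : ∀ k, ‖T k‖ ≤ ‖τ k‖ := fun k => by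
    simpa [e.orthonormal.1 k] using Lp.norm_smul_le (τ k) (e k)
  have hT : Summable fun k => ‖T k‖ ^ 2 :=
    hτ.of_nonneg_of_le (fun _ => by positivity) fun k => by gcongr; exact hT_le k
  have hT_norm : ∀ k, (eLpNorm (fun x => τ k x * e k x) 1 (volume.restrict D)).toReal = ‖T k‖ :=
    fun k => by rw [Lp.norm_def, eLpNorm_congr_ae (hT_coe k)]
  refine ⟨lp.synthesis T hT ∘L (e.repr : Lp ℝ 2 (volume.restrict D) →L[ℝ] ℓ²(ℕ, ℝ)),
    fun f => ⟨?_, ?_, ?_⟩⟩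
  · simpa [hT_norm, e.repr_apply_apply] using lp.summable_norm_mul_norm hT (e.repr f)
  · simpa [e.repr_apply_apply] using Lp.tendsto_eLpNorm_sub_sum_range
      (lp.hasSum_synthesis hT (e.repr f)) fun k =>
        (Lp.coeFn_smul _ _).trans ((hT_coe k).const_smul _)
  · calc _ ≤ √(∑' k, ‖T k‖ ^ 2) * ‖e.repr f‖ := lp.norm_synthesis_apply_le hT _
      _ ≤ √(∑' k, ‖τ k‖ ^ 2) * ‖f‖ := by
        rw [e.repr.norm_map]
        gcongr with k
        exact hT_le k

/-- For an orthonormal basis `(e_k)` of `L²(D;ℝ)` and `(τ_k) ⊆ L²(D;ℝ)` with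
`∑ ‖τ_k‖² < ∞`, the series `i f = ∑ ⟨e_k, f⟩ τ_k(·) e_k(·)` converges absolutely in
`L¹(D;ℝ)` and defines a bounded linear map `i : L²(D;ℝ) → L¹(D;ℝ)` with
`‖i f‖_{L¹} ≤ (∑ ‖τ_k‖²)^{1/2} ‖f‖_{L²}`. -/
theorem statement16 (n : ℕ) (D : Set (Fin n → ℝ)) (hD : MeasurableSet D)
    (e : HilbertBasis ℕ ℝ (Lp ℝ 2 (volume.restrict D)))
    (τ : ℕ → Lp ℝ 2 (volume.restrict D))
    (hτ : Summable fun k => ‖τ k‖ ^ 2) :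
    ∃ I : Lp ℝ 2 (volume.restrict D) →L[ℝ] Lp ℝ 1 (volume.restrict D),
      ∀ f : Lp ℝ 2 (volume.restrict D),
        (Summable fun k => |(inner ℝ (e k) f : ℝ)| *
          (eLpNorm (fun x => (τ k : (Fin n → ℝ) → ℝ) x *
            ((e k : Lp ℝ 2 (volume.restrict D)) : (Fin n → ℝ) → ℝ) x) 1
            (volume.restrict D)).toReal) ∧
        Tendsto (fun N => eLpNorm (fun x => (I f : (Fin n → ℝ) → ℝ) x -
            ∑ k ∈ Finset.range N, (inner ℝ (e k) f : ℝ) *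
              ((τ k : (Fin n → ℝ) → ℝ) x *
                ((e k : Lp ℝ 2 (volume.restrict D)) : (Fin n → ℝ) → ℝ) x)) 1
            (volume.restrict D)) atTop (nhds 0) ∧
        ‖I f‖ ≤ Real.sqrt (∑' k, ‖τ k‖ ^ 2) * ‖f‖ :=
  statement16_general n D e τ hτ
end

section
/- Let H ∈ (1/2,1), T > 0, and let (λ_k)_{k∈ℕ} be a sequence of positive reals and (q_k)_{k∈ℕ} a real sequence with ∑_{k=1}^∞ q_k²/λ_k^{2H} < ∞. Then ∑_{k=1}^∞ q_k² ∫₀ᵀ∫₀ᵀ e^{−λ_k s} e^{−λ_k t} |s−t|^{2H−2} ds dt < ∞. (Equivalently, ∑_k ‖q_k e^{−λ_k ·}‖²_{|M|} < ∞, which is the Hilbert–Schmidt criterion establishing existence of a weak solution of the stochastic heat equation dY = AY dt + dB driven by cylindrical fractional Brownian motion when A has eigenvalues −λ_k and the noise has weights q_k along the eigenbasis.) -/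
/-!
For `s, t ≥ 0` we have `s + t ≥ (s + |s - t|) / 2`, so the integrand is dominated by
`e^{-λs/2} · |s - t|^{2H-2} e^{-λ|s-t|/2}`. Integrating `t` over `ℝ` and then `s` over `(0, ∞)`
gives Gamma integrals, which bound the double integral by `2^{2H+1} Γ(2H-1) λ^{-2H}`; the series
is therefore dominated by a multiple of `∑ q_k² / λ_k^{2H}`.
-/

open MeasureTheory Set
open scoped ENNReal

theorem lintegral_comp_abs (f : ℝ → ℝ≥0∞) :
    ∫⁻ x, f |x| = 2 * ∫⁻ x in Ioi 0, f x := by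
  have hpos : ∫⁻ x in Ioi 0, f |x| = ∫⁻ x in Ioi 0, f x :=
    setLIntegral_congr_fun measurableSet_Ioi fun x hx => by rw [abs_of_pos hx]
  have hneg : ∫⁻ x in Iic 0, f |x| = ∫⁻ x in Ioi 0, f x := by
    rw [setLIntegral_congr Iio_ae_eq_Iic.symm, ← lintegral_indicator measurableSet_Iio,
      ← lintegral_indicator measurableSet_Ioi, ← lintegral_neg_eq_self]
    congr 1 with x
    simp only [indicator_apply, mem_Iio, mem_Ioi, neg_lt_zero, abs_neg]
    split_ifs with hx
    · rw [abs_of_pos hx]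
    · rfl
  rw [← lintegral_add_compl _ measurableSet_Ioi, compl_Ioi, hpos, hneg, two_mul]

theorem lintegral_rpow_mul_exp_neg_mul_Ioi {r c : ℝ} (hr : 0 < r) (hc : 0 < c) :
    ∫⁻ x in Ioi 0, ENNReal.ofReal (x ^ (r - 1) * Real.exp (-(c * x)))
      = ENNReal.ofReal ((1 / c) ^ r * Real.Gamma r) := by
  have hint : IntegrableOn (fun x : ℝ => x ^ (r - 1) * Real.exp (-(c * x))) (Ioi 0) := by
    simpa [Real.rpow_one] using
      integrableOn_rpow_mul_exp_neg_mul_rpow (p := 1) (by linarith : (-1 : ℝ) < r - 1) one_pos hc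
  rw [← Real.integral_rpow_mul_exp_neg_mul_Ioi hr hc, ofReal_integral_eq_lintegral_ofReal hint]
  filter_upwards [ae_restrict_mem measurableSet_Ioi] with x (hx : 0 < x)
  positivity

theorem lintegral_exp_neg_mul_Ioi {c : ℝ} (hc : 0 < c) :
    ∫⁻ x in Ioi 0, ENNReal.ofReal (Real.exp (-(c * x))) = ENNReal.ofReal (1 / c) := by
  simpa [Real.Gamma_one] using lintegral_rpow_mul_exp_neg_mul_Ioi one_pos hc

theorem lintegral_abs_rpow_mul_exp_neg_mul_abs {p c : ℝ} (hp : -1 < p) (hc : 0 < c) :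
    ∫⁻ x, ENNReal.ofReal (|x| ^ p * Real.exp (-(c * |x|)))
      = ENNReal.ofReal (2 * ((1 / c) ^ (p + 1) * Real.Gamma (p + 1))) := by
  have h := lintegral_rpow_mul_exp_neg_mul_Ioi (r := p + 1) (by linarith) hc
  rw [add_sub_cancel_right] at h
  rw [lintegral_comp_abs (fun x => ENNReal.ofReal (x ^ p * Real.exp (-(c * x)))), h,
    ENNReal.ofReal_mul zero_le_two, ENNReal.ofReal_ofNat]

theorem exp_neg_mul_mul_exp_neg_mul_le {b s t : ℝ} (hb : 0 ≤ b) (hs : 0 ≤ s) (ht : 0 ≤ t) :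
    Real.exp (-b * s) * Real.exp (-b * t)
      ≤ Real.exp (-(b / 2 * s)) * Real.exp (-(b / 2 * |s - t|)) := by
  rw [← Real.exp_add, ← Real.exp_add, Real.exp_le_exp]
  have : |s - t| ≤ s + 2 * t := by rw [abs_le]; constructor <;> linarith
  nlinarith

theorem lintegral_Icc_exp_neg_mul_exp_neg_mul_abs_rpow_le {H T b : ℝ} (hH : 1 / 2 < H)
    (hb : 0 < b) :
    ∫⁻ s in Icc 0 T, ∫⁻ t in Icc 0 T,
        ENNReal.ofReal (Real.exp (-b * s) * Real.exp (-b * t) * |s - t| ^ (2 * H - 2))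
      ≤ ENNReal.ofReal (2 * Real.Gamma (2 * H - 1) * 2 ^ (2 * H) / b ^ (2 * H)) := by
  set c := b / 2
  have hc : 0 < c := half_pos hb
  set K := ENNReal.ofReal (2 * ((1 / c) ^ (2 * H - 1) * Real.Gamma (2 * H - 1)))
  have inner : ∀ s ∈ Icc (0 : ℝ) T, ∫⁻ t in Icc 0 T,
      ENNReal.ofReal (Real.exp (-b * s) * Real.exp (-b * t) * |s - t| ^ (2 * H - 2))
        ≤ ENNReal.ofReal (Real.exp (-(c * s))) * K := fun s hs => calc
    _ ≤ ∫⁻ t in Icc 0 T, ENNReal.ofReal (Real.exp (-(c * s))) *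
          ENNReal.ofReal (|s - t| ^ (2 * H - 2) * Real.exp (-(c * |s - t|))) := by
        refine setLIntegral_mono' measurableSet_Icc fun t ht => ?_
        rw [← ENNReal.ofReal_mul (Real.exp_nonneg _)]
        refine ENNReal.ofReal_le_ofReal ?_
        calc _ ≤ Real.exp (-(c * s)) * Real.exp (-(c * |s - t|)) * |s - t| ^ (2 * H - 2) :=
              mul_le_mul_of_nonneg_right (exp_neg_mul_mul_exp_neg_mul_le hb.le hs.1 ht.1)
                (by positivity)
          _ = _ := by ring
    _ ≤ ∫⁻ t, ENNReal.ofReal (Real.exp (-(c * s))) *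
          ENNReal.ofReal (|s - t| ^ (2 * H - 2) * Real.exp (-(c * |s - t|))) :=
        setLIntegral_le_lintegral _ _
    _ = ENNReal.ofReal (Real.exp (-(c * s))) * K := by
        rw [lintegral_const_mul' _ _ ENNReal.ofReal_ne_top,
          lintegral_sub_left_eq_self (fun u => ENNReal.ofReal (|u| ^ (2 * H - 2) *
            Real.exp (-(c * |u|)))) s,
          lintegral_abs_rpow_mul_exp_neg_mul_abs (by linarith) hc,
          show 2 * H - 2 + 1 = 2 * H - 1 by ring]
  calc _ ≤ ∫⁻ s in Icc 0 T, ENNReal.ofReal (Real.exp (-(c * s))) * K :=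
        setLIntegral_mono' measurableSet_Icc inner
    _ = (∫⁻ s in Icc 0 T, ENNReal.ofReal (Real.exp (-(c * s)))) * K :=
        lintegral_mul_const' _ _ ENNReal.ofReal_ne_top
    _ ≤ (∫⁻ s in Ioi 0, ENNReal.ofReal (Real.exp (-(c * s)))) * K := by
        gcongr 1
        rw [setLIntegral_congr Ioc_ae_eq_Icc.symm]
        exact lintegral_mono_set Ioc_subset_Ioi_self
    _ = _ := by
        rw [lintegral_exp_neg_mul_Ioi hc, ← ENNReal.ofReal_mul (by positivity)]
        congr 1
        rw [one_div_div, Real.rpow_sub_one (by positivity), Real.div_rpow zero_le_two hb.le]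
        field_simp

theorem statement18_general (H T : ℝ) (hH : H ∈ Set.Ioo (1 / 2 : ℝ) 1)
    (l : ℕ → ℝ) (hl : ∀ k, 0 < l k) (q : ℕ → ℝ)
    (hsum : Summable fun k => q k ^ 2 / (l k) ^ (2 * H)) :
    (∑' k, ENNReal.ofReal (q k ^ 2) *
        ∫⁻ s in Set.Icc (0 : ℝ) T, ∫⁻ t in Set.Icc (0 : ℝ) T,
          ENNReal.ofReal (Real.exp (-(l k) * s) * Real.exp (-(l k) * t) *
            |s - t| ^ (2 * H - 2))) < ⊤ := by
  set C := 2 * Real.Gamma (2 * H - 1) * 2 ^ (2 * H)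
  have hC : 0 ≤ C := by
    have := Real.Gamma_pos_of_pos (by linarith [hH.1] : 0 < 2 * H - 1)
    positivity
  have hterm (k : ℕ) : 0 ≤ q k ^ 2 / l k ^ (2 * H) := by
    have := hl k
    positivity
  calc _ ≤ ∑' k, ENNReal.ofReal C * ENNReal.ofReal (q k ^ 2 / l k ^ (2 * H)) := by
        refine ENNReal.tsum_le_tsum fun k => ?_
        grw [lintegral_Icc_exp_neg_mul_exp_neg_mul_abs_rpow_le hH.1 (hl k),
          ← ENNReal.ofReal_mul (sq_nonneg _), ← ENNReal.ofReal_mul hC]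
        exact (congrArg ENNReal.ofReal (by ring)).le
    _ = ENNReal.ofReal C * ENNReal.ofReal (∑' k, q k ^ 2 / l k ^ (2 * H)) := by
        rw [ENNReal.tsum_mul_left, ENNReal.ofReal_tsum_of_nonneg hterm hsum]
    _ < ⊤ := ENNReal.mul_lt_top ENNReal.ofReal_lt_top ENNReal.ofReal_lt_top

/-- For `H > 1/2`: if `∑ q_k²/λ_k^{2H} < ∞` then
`∑ q_k² ∫₀ᵀ∫₀ᵀ e^{-λ_k s} e^{-λ_k t} |s-t|^{2H-2} ds dt < ∞` (the Hilbert–Schmidt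
criterion for the stochastic heat equation driven by cylindrical fBm). -/
theorem statement18 (H T : ℝ) (hH : H ∈ Set.Ioo (1 / 2 : ℝ) 1) (hT : 0 < T)
    (l : ℕ → ℝ) (hl : ∀ k, 0 < l k) (q : ℕ → ℝ)
    (hsum : Summable fun k => q k ^ 2 / (l k) ^ (2 * H)) :
    (∑' k, ENNReal.ofReal (q k ^ 2) *
        ∫⁻ s in Set.Icc (0 : ℝ) T, ∫⁻ t in Set.Icc (0 : ℝ) T,
          ENNReal.ofReal (Real.exp (-(l k) * s) * Real.exp (-(l k) * t) *
            |s - t| ^ (2 * H - 2))) < ⊤ :=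
  statement18_general H T hH l hl q hsum
end
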